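/- Let k₁ ≥ 0 and k₂ > 0, let f(t) = k₁ t + k₂ max(t, 0) on [-1/2,1/2], and let ε > 0 satisfy ε² ≤ (k₁+k₂)²/24. Then ω(ε, f, F_m) = (3(k₁+k₂))^{1/3} ε^{2/3}. -/

import Mathlib

/-!
Write `k = k₁ + k₂`, `d = (3k)^{1/3} ε^{2/3}` and `m = d / k`, so that
`ε² = k² m³ / 3 = ∫₀^m (d - k t)² dt`, and `m ≤ 1/2` because `ε² ≤ k² / 24`.
On `[0, m]` the function `f` has slope `k`; raising it there to the level `f 0 + d` gives a
nondecreasing `g` with `g 0 - f 0 = d` at `L²` distance exactly `ε`.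
Conversely, if `g` is nondecreasing and `g 0 - f 0 = c > d`, then `g t - f t ≥ c - k t ≥ 0` on
`[0, m]`, so `∫ (g - f)² ≥ ∫₀^m (c - k t)² > ε²`. The case `c < -d` is the same argument on
`[-m, 0]`, reflected, where `f` grows at rate at most `k` since `k₁ ≤ k`.
-/

open MeasureTheory

/-- The local modulus of continuity of `f` at `0` over the class of nondecreasing
functions on `[-1/2, 1/2]`. -/
noncomputable def omegaMonotone (ε : ℝ) (f : ℝ → ℝ) : ℝ :=
  sSup {d : ℝ | ∃ g : ℝ → ℝ, MonotoneOn g (Set.Icc (-(1:ℝ)/2) (1/2)) ∧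
    (∫ t in (-(1:ℝ)/2)..(1/2), (g t - f t)^2) ≤ ε^2 ∧ d = |g 0 - f 0|}

open Set

lemma integral_sq_sub_mul (c k m : ℝ) :
    ∫ t in (0:ℝ)..m, (c - k * t) ^ 2 = c ^ 2 * m - c * k * m ^ 2 + k ^ 2 * m ^ 3 / 3 := by
  have hderiv : ∀ t : ℝ, HasDerivAt (fun t => c ^ 2 * t - c * k * t ^ 2 + k ^ 2 * t ^ 3 / 3)
      ((c - k * t) ^ 2) t := fun t =>
    ((((hasDerivAt_id' t).const_mul (c ^ 2)).sub ((hasDerivAt_pow 2 t).const_mul (c * k))).add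
      (((hasDerivAt_pow 3 t).const_mul (k ^ 2)).div_const 3)).congr_deriv (by ring)
  rw [intervalIntegral.integral_eq_sub_of_hasDerivAt (fun t _ => hderiv t)
    (by apply Continuous.intervalIntegrable; fun_prop)]
  ring

lemma MonotoneOn.memLp_restrict_Ioc {g : ℝ → ℝ} {a b : ℝ} (hg : MonotoneOn g (Icc a b))
    (p : ENNReal) : MemLp g p (volume.restrict (Ioc a b)) := by
  refine memLp_of_bounded (a := g a) (b := g b) ?_ ?_ p
  · refine (ae_restrict_iff' measurableSet_Ioc).2 (Filter.Eventually.of_forall fun t ht => ?_)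
    have ht' := Ioc_subset_Icc_self ht
    have hab := ht'.1.trans ht'.2
    exact ⟨hg (left_mem_Icc.2 hab) ht' ht'.1, hg ht' (right_mem_Icc.2 hab) ht'.2⟩
  · exact ((hg.integrableOn_isCompact isCompact_Icc).mono_set
      Ioc_subset_Icc_self).aestronglyMeasurable

lemma MonotoneOn.intervalIntegrable_sq_sub {f g : ℝ → ℝ} {a b : ℝ} (hab : a ≤ b)
    (hg : MonotoneOn g (Icc a b)) (hf : MonotoneOn f (Icc a b)) :
    IntervalIntegrable (fun t => (g t - f t) ^ 2) volume a b :=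
  (intervalIntegrable_iff_integrableOn_Ioc_of_le hab).2
    ((hg.memLp_restrict_Ioc 2).sub (hf.memLp_restrict_Ioc 2)).integrable_sq

lemma le_mul_of_integral_sq_le {h : ℝ → ℝ} {k m : ℝ} (hk : 0 ≤ k) (hm : 0 < m)
    (hh : ∀ t ∈ Icc 0 m, h 0 - k * t ≤ h t)
    (hint : IntervalIntegrable (fun t => h t ^ 2) volume 0 m)
    (hle : ∫ t in (0:ℝ)..m, h t ^ 2 ≤ k ^ 2 * m ^ 3 / 3) : h 0 ≤ k * m := by
  by_contra! hlt
  have hpt : ∀ t ∈ Icc 0 m, (h 0 - k * t) ^ 2 ≤ h t ^ 2 := fun t ht =>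
    pow_le_pow_left₀ (by nlinarith [ht.2]) (hh t ht) 2
  have hmono := intervalIntegral.integral_mono_on hm.le
    (by apply Continuous.intervalIntegrable; fun_prop) hint hpt
  rw [integral_sq_sub_mul] at hmono
  nlinarith [mul_pos (mul_pos hm (hlt.trans_le' (by positivity))) (sub_pos.2 hlt)]

lemma abs_sub_le_of_integral_sq_le {f g : ℝ → ℝ} {a b k m : ℝ} (hk : 0 ≤ k) (hm : 0 < m)
    (ha : a ≤ -m) (hb : m ≤ b) (hg : MonotoneOn g (Icc a b))
    (hf_right : ∀ t ∈ Icc 0 m, f t ≤ f 0 + k * t)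
    (hf_left : ∀ t ∈ Icc 0 m, f 0 - k * t ≤ f (-t))
    (hint : IntervalIntegrable (fun t => (g t - f t) ^ 2) volume a b)
    (hle : ∫ t in a..b, (g t - f t) ^ 2 ≤ k ^ 2 * m ^ 3 / 3) :
    |g 0 - f 0| ≤ k * m := by
  have hmem : ∀ t ∈ Icc (-m) m, t ∈ Icc a b := fun t ht => ⟨ha.trans ht.1, ht.2.trans hb⟩
  have hint' : ∀ {c d}, c ∈ Icc (-m) m → d ∈ Icc (-m) m →
      IntervalIntegrable (fun t => (g t - f t) ^ 2) volume c d := fun hc hd =>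
    hint.mono_set (uIcc_subset_uIcc (Icc_subset_uIcc (hmem _ hc)) (Icc_subset_uIcc (hmem _ hd)))
  have hle' : ∀ {c d}, a ≤ c → c ≤ d → d ≤ b →
      ∫ t in c..d, (g t - f t) ^ 2 ≤ k ^ 2 * m ^ 3 / 3 :=
    fun hc hcd hd => (intervalIntegral.integral_mono_interval hc hcd hd
      (Filter.Eventually.of_forall fun t => sq_nonneg _) hint).trans hle
  have hm0 : (0:ℝ) ∈ Icc (-m) m := ⟨by linarith, hm.le⟩
  rw [abs_le, neg_le]
  constructor
  · have hrefl : (fun t => (f (-t) - g (-t)) ^ 2) = fun t => (g (-t) - f (-t)) ^ 2 := by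
      ext t
      ring
    have hleft : f (-0) - g (-0) ≤ k * m := by
      refine le_mul_of_integral_sq_le (h := fun t => f (-t) - g (-t)) hk hm (fun t ht => ?_) ?_ ?_
      · have := hg (hmem _ ⟨by linarith [ht.2], by linarith [ht.1]⟩) (hmem _ hm0)
          (neg_nonpos.2 ht.1)
        rw [neg_zero]
        linarith [hf_left t ht]
      · simpa [hrefl] using ((IntervalIntegrable.iff_comp_neg).1
          (hint' (c := -m) ⟨le_rfl, by linarith⟩ hm0)).symm
      · simpa [hrefl, intervalIntegral.integral_comp_neg (fun t => (g t - f t) ^ 2)] using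
          hle' ha (by linarith) (hm.le.trans hb)
    simpa using hleft
  · refine le_mul_of_integral_sq_le (h := fun t => g t - f t) hk hm (fun t ht => ?_)
      (hint' hm0 ⟨by linarith, le_rfl⟩) (hle' (ha.trans (by linarith)) hm.le hb)
    have := hg (hmem _ hm0) (hmem _ ⟨by linarith [ht.1], ht.2⟩) ht.1
    linarith [hf_right t ht]

noncomputable def raiseRight (f : ℝ → ℝ) (d t : ℝ) : ℝ :=
  if t < 0 then f t else max (f t) (f 0 + d)

section raiseRight

variable {f : ℝ → ℝ} {d : ℝ}

lemma raiseRight_zero (hd : 0 ≤ d) : raiseRight f d 0 = f 0 + d := by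
  simp [raiseRight, hd]

lemma Monotone.raiseRight (hf : Monotone f) : Monotone (raiseRight f d) := by
  intro s t hst
  unfold _root_.raiseRight
  split_ifs with hs ht ht
  · exact hf hst
  · exact (hf hst).trans (le_max_left _ _)
  · linarith
  · exact max_le_max (hf hst) le_rfl

lemma sq_raiseRight_sub_eq_indicator {k m : ℝ} (hf : Monotone f) (hm : 0 ≤ m)
    (hfm : ∀ t ∈ Icc 0 m, f t = f 0 + k * t) :
    (fun t => (raiseRight f (k * m) t - f t) ^ 2) =
      (Icc 0 m).indicator fun t => (k * m - k * t) ^ 2 := by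
  ext t
  rcases lt_or_ge t 0 with ht | ht
  · simp [raiseRight, ht, ht.not_ge]
  rcases le_or_gt t m with htm | htm
  · have hft := hfm t ⟨ht, htm⟩
    have hfle : f t ≤ f 0 + k * m := (hf htm).trans_eq (hfm m ⟨hm, le_rfl⟩)
    simp only [raiseRight, ht.not_gt, if_false, max_eq_right hfle,
      indicator_of_mem (show t ∈ Icc 0 m from ⟨ht, htm⟩)]
    rw [hft]
    ring
  · have hfle : f 0 + k * m ≤ f t := hfm m ⟨hm, le_rfl⟩ ▸ hf htm.le
    simp [raiseRight, ht.not_gt, max_eq_left hfle, htm.not_ge]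

lemma integral_sq_raiseRight_sub {a b k m : ℝ} (hf : Monotone f) (hm : 0 ≤ m)
    (hfm : ∀ t ∈ Icc 0 m, f t = f 0 + k * t) (ha : a < 0) (hb : m ≤ b) :
    ∫ t in a..b, (raiseRight f (k * m) t - f t) ^ 2 = k ^ 2 * m ^ 3 / 3 := by
  rw [sq_raiseRight_sub_eq_indicator hf hm hfm,
    intervalIntegral.integral_of_le (ha.le.trans (hm.trans hb)),
    setIntegral_indicator measurableSet_Icc,
    inter_eq_right.2 (Icc_subset_Ioc_iff hm |>.2 ⟨ha, hb⟩),
    integral_Icc_eq_integral_Ioc, ← intervalIntegral.integral_of_le hm, integral_sq_sub_mul]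
  ring

end raiseRight

theorem omegaMonotone_eq_of_kink {f : ℝ → ℝ} {k m ε : ℝ} (hf : Monotone f) (hk : 0 ≤ k)
    (hm : 0 < m) (hm_half : m ≤ 1 / 2) (hf_right : ∀ t ∈ Icc 0 m, f t = f 0 + k * t)
    (hf_left : ∀ t ∈ Icc 0 m, f 0 - k * t ≤ f (-t)) (hε : ε ^ 2 = k ^ 2 * m ^ 3 / 3) :
    omegaMonotone ε f = k * m := by
  refine IsGreatest.csSup_eq ⟨⟨raiseRight f (k * m), hf.raiseRight.monotoneOn _, ?_, ?_⟩, ?_⟩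
  · rw [integral_sq_raiseRight_sub hf hm.le hf_right (by norm_num) hm_half, hε]
  · rw [raiseRight_zero (by positivity), add_sub_cancel_left, abs_of_nonneg (by positivity)]
  · rintro _ ⟨g, hg, hle, rfl⟩
    exact abs_sub_le_of_integral_sq_le hk hm (by linarith) hm_half hg
      (fun t ht => (hf_right t ht).le) hf_left
      (hg.intervalIntegrable_sq_sub (by norm_num) (hf.monotoneOn _)) (hε ▸ hle)

theorem modulus_kink_monotone
    (k₁ k₂ ε : ℝ) (hk₁ : 0 ≤ k₁) (hk₂ : 0 < k₂) (hε : 0 < ε)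
    (hε2 : ε^2 ≤ (k₁ + k₂)^2/24) :
    omegaMonotone ε (fun t => k₁ * t + k₂ * max t 0)
      = (3*(k₁ + k₂)) ^ ((1:ℝ)/3) * ε ^ ((2:ℝ)/3) := by
  set k := k₁ + k₂
  have hk : 0 < k := by positivity
  set d := (3 * k) ^ ((1:ℝ)/3) * ε ^ ((2:ℝ)/3)
  have hd3 : d ^ 3 = 3 * k * ε ^ 2 := by
    rw [mul_pow, ← Real.rpow_natCast, ← Real.rpow_natCast (ε ^ _),
      ← Real.rpow_mul (by positivity), ← Real.rpow_mul hε.le]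
    norm_num
  have hdk : d ≤ k / 2 := by
    refine le_of_pow_le_pow_left₀ three_ne_zero (by positivity) ?_
    nlinarith
  have hf : Monotone fun t : ℝ => k₁ * t + k₂ * max t 0 := fun s t hst => by
    have := max_le_max hst (le_refl (0:ℝ))
    nlinarith
  convert omegaMonotone_eq_of_kink (m := d / k) hf hk.le (by positivity)
    (by rw [div_le_iff₀ hk]; linarith) (fun t ht => ?_) (fun t ht => ?_) ?_ using 1
  · field_simp
  · simp only [max_eq_left ht.1, mul_zero, max_self, add_zero, zero_add]
    ring
  · simp only [mul_zero, max_self, add_zero, zero_sub, mul_neg, max_eq_right (neg_nonpos.2 ht.1),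
      neg_le_neg_iff]
    nlinarith [ht.1]
  · field_simp
    nlinarith
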